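/- Let n ≥ 1 and m ≥ 0 be integers, set r = n + m, and let F_r be the free group on generators g_1, …, g_n, g_{n+1}, …, g_r. Let S_n = Equiv.Perm (Fin n) act on F_r by the homomorphism α : S_n → Aut(F_r) with α(σ)(g_i) = g_{σ(i)} for 1 ≤ i ≤ n and α(σ)(g_j) = g_j for n+1 ≤ j ≤ r, and form the semidirect product F_r ⋊_α S_n. For 1 ≤ i ≤ n let h_i = (g_1^i·g_2^i·⋯·g_r^i)^3 ∈ F_r. Then: (a) for every σ ∈ S_n and every n+1 ≤ j ≤ r, the elements (1, σ) and (g_j, 1) of F_r ⋊_α S_n commute; and (b) the group homomorphism from the free product F_n ∗ (S_n × F_m) to F_r ⋊_α S_n, determined by sending the i-th generator of the free group F_n to (h_i, 1), sending (σ, 1) ∈ S_n × F_m to (1, σ), and sending the j-th generator of the free group F_m (viewed in S_n × F_m) to (g_{n+j}, 1), is injective. -/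

import Mathlib

/-- The homomorphism `α` from `Sₙ = Equiv.Perm (Fin n)` into the automorphism group of the
free group `F_r` on `Fin n ⊕ Fin m` (with `r = n + m`), permuting the first `n` generators
and fixing the remaining `m` generators. -/
def permAutS (n m : ℕ) : Equiv.Perm (Fin n) →* MulAut (FreeGroup (Fin n ⊕ Fin m)) where
  toFun σ := FreeGroup.freeGroupCongr (Equiv.sumCongr σ (Equiv.refl (Fin m)))
  map_one' := by
    have h : (Equiv.sumCongr (1 : Equiv.Perm (Fin n)) (Equiv.refl (Fin m)))
        = Equiv.refl (Fin n ⊕ Fin m) := by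
      ext x; cases x <;> rfl
    try dsimp only
    rw [h]
    exact FreeGroup.freeGroupCongr_refl
  map_mul' σ τ := by
    have h : (Equiv.sumCongr (σ * τ) (Equiv.refl (Fin m)))
        = (Equiv.sumCongr τ (Equiv.refl (Fin m))).trans
            (Equiv.sumCongr σ (Equiv.refl (Fin m))) := by
      ext x; cases x <;> rfl
    try dsimp only
    rw [h, ← FreeGroup.freeGroupCongr_trans]
    rfl

/-- `h_i = (g₁^i · g₂^i · ⋯ · g_r^i)³` in the free group on `Fin n ⊕ Fin m`, where the
generators are listed as `g₁, …, gₙ, g_{n+1}, …, g_r` and the exponent is `i + 1` for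
`i : Fin n` (i.e. `1 ≤ i + 1 ≤ n`). -/
def hWord (n m : ℕ) (i : Fin n) : FreeGroup (Fin n ⊕ Fin m) :=
  (((List.ofFn fun a : Fin n => FreeGroup.of (Sum.inl a : Fin n ⊕ Fin m) ^ ((i : ℕ) + 1)) ++
      (List.ofFn fun b : Fin m =>
        FreeGroup.of (Sum.inr b : Fin n ⊕ Fin m) ^ ((i : ℕ) + 1))).prod) ^ 3

/-!
Ping-pong for `F_r ⋊ Sₙ` acting on `F_r` by `(a, σ) • x = a · α(σ)(x)`. Let `pᵢ` be the reduced
word of `g₁^i ⋯ g_r^i`, so that `hᵢ = pᵢ³`. The table of the factor generated by `hᵢ` consists of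
the reduced words starting with `pᵢ` or `pᵢ⁻¹`, that of `Sₙ × Fₘ` of the words starting with none of
these. A power `hᵢ^z ≠ 1` is `pᵢ^(±3|z|)`, and less than one copy of `pᵢ^(±1)` cancels against a
word not starting with `pᵢ^(∓1)`. An element `(σ, w) ≠ 1` changes only the initial run of letters
`g_{n+1}, …, g_r` and permutes the letters `g₁, …, gₙ` behind it; as the exponent `i` and the order
of `g₁, …, gₙ` in `pᵢ^(±1)` can be read off from that part, a result starting with some `pⱼ^(±1)`
would force `σ = 1` and then `w = 1`.
-/

namespace List

variable {β : Type*} {p : β → Bool}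

theorem takeWhile_dropWhile_append_of_forall {E L : List β} (hE : ∀ a ∈ E, p a)
    (hL : ∀ b ∈ L.head?, p b = false) :
    (E ++ L).takeWhile p = E ∧ (E ++ L).dropWhile p = L := by
  rw [takeWhile_append_of_pos hE, dropWhile_append_of_pos hE]
  rcases L with _ | ⟨b, L⟩
  · simp
  · have hb : ¬ p b := by simpa using hL b rfl
    rw [takeWhile_cons_of_neg hb, dropWhile_cons_of_neg hb, append_nil]
    exact ⟨rfl, rfl⟩

theorem head?_dropWhile_eq_false (l : List β) : ∀ b ∈ (l.dropWhile p).head?, p b = false := by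
  intro b hb
  have := head?_dropWhile_not p l
  rwa [Option.mem_def.1 hb] at this

theorem IsPrefix.takeWhile_dropWhile {P W : List β} (h : P <+: W) (hP : P.dropWhile p ≠ []) :
    W.takeWhile p = P.takeWhile p ∧ P.dropWhile p <+: W.dropWhile p := by
  obtain ⟨t, rfl⟩ := h
  have key := takeWhile_dropWhile_append_of_forall (E := P.takeWhile p)
    (L := P.dropWhile p ++ t) (fun _ => mem_takeWhile_imp)
    (by rw [head?_append_of_ne_nil _ hP]; exact head?_dropWhile_eq_false P)
  rw [← append_assoc, takeWhile_append_dropWhile] at key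
  exact ⟨key.1, key.2 ▸ prefix_append _ _⟩

theorem IsPrefix.getElem?_eq_some {P W : List β} (h : P <+: W) {k : ℕ} {x : β}
    (hk : P[k]? = some x) : W[k]? = some x := by
  obtain ⟨t, rfl⟩ := h
  rwa [getElem?_append_left (List.getElem?_eq_some_iff.1 hk).1]

end List

namespace FreeGroup

open List Function

variable {α β : Type*}

theorem isReduced_of_forall_snd_eq {L : List (α × Bool)} {b : Bool} (h : ∀ a ∈ L, a.2 = b) :
    IsReduced L :=
  Pairwise.isChain <| pairwise_of_forall_mem_list fun x hx y hy _ => (h x hx).trans (h y hy).symm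

theorem IsReduced.append_of_fst_ne {L M : List (α × Bool)} (hL : IsReduced L) (hM : IsReduced M)
    (h : ∀ a ∈ L.getLast?, ∀ b ∈ M.head?, a.1 ≠ b.1) : IsReduced (L ++ M) :=
  IsChain.append hL hM fun a ha b hb hab => absurd hab (h a ha b hb)

theorem IsReduced.map {f : α → β} (hf : Injective f) {L : List (α × Bool)}
    (h : IsReduced L) : IsReduced (L.map fun a => (f a.1, a.2)) :=
  (isChain_map _).2 (h.imp fun _ _ hab heq => hab (hf heq))

theorem invRev_isPrefix_of_isSuffix_invRev {p L : List (α × Bool)} (h : p <:+ invRev L) :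
    invRev p <+: L := by
  obtain ⟨t, ht⟩ := h
  exact ⟨invRev t, by rw [← invRev_append, ht, invRev_invRev]⟩

def blockWord (e : ℕ) (b : Bool) (L : List α) : List (α × Bool) :=
  L.flatMap fun a => replicate e (a, b)

theorem blockWord_cons (e : ℕ) (b : Bool) (a : α) (L : List α) :
    blockWord e b (a :: L) = replicate e (a, b) ++ blockWord e b L :=
  flatMap_cons

theorem snd_eq_of_mem_blockWord {e : ℕ} {b : Bool} {L : List α} {x : α × Bool}
    (hx : x ∈ blockWord e b L) : x.2 = b := by
  obtain ⟨a, -, hx⟩ := mem_flatMap.1 hx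
  rw [eq_of_mem_replicate hx]

theorem blockWord_map (e : ℕ) (b : Bool) (f : α → β) (L : List α) :
    blockWord e b (L.map f) = (blockWord e b L).map fun a => (f a.1, a.2) := by
  simp [blockWord, flatMap_map, map_flatMap, map_replicate]

theorem blockWord_append (e : ℕ) (b : Bool) (L M : List α) :
    blockWord e b (L ++ M) = blockWord e b L ++ blockWord e b M :=
  flatMap_append

theorem invRev_blockWord (e : ℕ) (b : Bool) (L : List α) :
    invRev (blockWord e b L) = blockWord e (!b) L.reverse := by
  induction L with
  | nil => rfl
  | cons a L ih =>
    rw [blockWord_cons, invRev_append, ih, reverse_cons, blockWord_append]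
    simp [blockWord, invRev, map_replicate]

theorem dropWhile_blockWord {e : ℕ} (he : 0 < e) (b : Bool) (p : α → Bool) (L : List α) :
    (blockWord e b L).dropWhile (p ·.1) = blockWord e b (L.dropWhile p) := by
  induction L with
  | nil => rfl
  | cons a L ih =>
    by_cases ha : p a
    · rw [blockWord_cons, dropWhile_append_of_pos (by simp [ha]), ih, dropWhile_cons_of_pos ha]
    · obtain ⟨e, rfl⟩ := Nat.exists_eq_add_one_of_ne_zero he.ne'
      rw [dropWhile_cons_of_neg ha, blockWord_cons, replicate_succ, cons_append,
        dropWhile_cons_of_neg (by simpa using ha)]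

theorem blockWord_injective {e : ℕ} (he : 0 < e) (b : Bool) :
    Injective (blockWord e b : List α → List (α × Bool)) := by
  intro L M h
  induction L generalizing M with
  | nil => cases M <;> simp_all [blockWord, he.ne']
  | cons a L ih =>
    cases M with
    | nil => simp_all [blockWord, he.ne']
    | cons c M =>
      rw [blockWord_cons, blockWord_cons] at h
      obtain ⟨h₁, h₂⟩ := append_inj h (by simp)
      have : a = c := by
        have := congrArg (·[0]?) h₁
        simpa [getElem?_replicate, he] using this
      rw [this, ih h₂]

theorem getElem?_blockWord_cons_of_lt {e : ℕ} (b : Bool) (a : α) (L : List α) {k : ℕ}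
    (hk : k < e) : (blockWord e b (a :: L))[k]? = some (a, b) := by
  rw [blockWord_cons, getElem?_append_left (by simpa using hk), getElem?_replicate, if_pos hk]

theorem getElem?_blockWord_cons_cons {e : ℕ} (he : 0 < e) (b : Bool) (a d : α) (L : List α) :
    (blockWord e b (a :: d :: L))[e]? = some (d, b) := by
  rw [blockWord_cons, getElem?_append_right (by simp), length_replicate, Nat.sub_self,
    getElem?_blockWord_cons_of_lt b d L he]

/-- The exponent `e'` is read off from a word starting with `blockWord e' b' (a' :: d' :: L')` as
the position of the first letter other than `(a', b')`. -/
theorem le_of_blockWord_isPrefix {e e' : ℕ} (he' : 0 < e') {b b' : Bool} {a a' d' : α}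
    {L L' : List α} (had' : a' ≠ d') {W : List (α × Bool)}
    (h : blockWord e b (a :: L) <+: W) (h' : blockWord e' b' (a' :: d' :: L') <+: W) :
    e ≤ e' := by
  by_contra! hlt
  have h₀ := h.getElem?_eq_some (getElem?_blockWord_cons_of_lt b a L (he'.trans hlt))
  have h₀' := h'.getElem?_eq_some (getElem?_blockWord_cons_of_lt b' a' (d' :: L') he')
  have h₁ := h.getElem?_eq_some (getElem?_blockWord_cons_of_lt b a L hlt)
  have h₁' := h'.getElem?_eq_some (getElem?_blockWord_cons_cons he' b' a' d' L')
  simp only [h₀, h₁, Option.some.injEq, Prod.mk.injEq] at h₀' h₁'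
  exact had' (h₀'.1.symm.trans h₁'.1)

theorem prod_map_of_pow (e : ℕ) (L : List α) :
    (L.map fun a => of a ^ e).prod = mk (blockWord e true L) := by
  induction L with
  | nil => rfl
  | cons a L ih =>
    rw [map_cons, prod_cons, ih, blockWord_cons, ← mul_mk, of, pow_mk,
      flatten_replicate_singleton]

section DecidableEq

variable [DecidableEq α]

theorem toWord_map [DecidableEq β] {f : α → β} (hf : Injective f) (x : FreeGroup α) :
    (map f x).toWord = x.toWord.map fun a => (f a.1, a.2) := by
  conv_lhs => rw [← mk_toWord (x := x)]
  rw [map.mk, toWord_mk, (isReduced_toWord.map hf).reduce_eq]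

theorem exists_reduce_append {L₁ L₂ : List (α × Bool)} (h₁ : IsReduced L₁) (h₂ : IsReduced L₂) :
    ∃ c u v, L₁ = u ++ invRev c ∧ L₂ = c ++ v ∧ reduce (L₁ ++ L₂) = u ++ v := by
  induction L₁ with
  | nil => exact ⟨[], [], L₂, rfl, rfl, h₂.reduce_eq⟩
  | cons a L ih =>
    obtain ⟨c, u, v, rfl, rfl, huv⟩ := ih (h₁.infix ⟨[a], [], by simp⟩)
    have hred : IsReduced (u ++ v) := isReduced_iff_reduce_eq.2 (huv ▸ reduce.idem)
    rw [cons_append, ← reduce_cons_reduce, huv]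
    rcases u with _ | ⟨a', u⟩
    · rcases v with _ | ⟨⟨b₁, b₂⟩, v⟩
      · exact ⟨c, [a], [], by simp, rfl, rfl⟩
      · obtain ⟨a₁, a₂⟩ := a
        by_cases hab : a₁ = b₁ ∧ a₂ = !b₂
        · obtain ⟨rfl, rfl⟩ := hab
          refine ⟨c ++ [(a₁, b₂)], [], v, by simp [invRev], by simp, ?_⟩
          simp only [nil_append] at hred ⊢
          rw [reduce.Step.eq Red.Step.cons_not_rev,
            (hred.infix ⟨[(a₁, b₂)], [], by simp⟩).reduce_eq]
        · refine ⟨c, [(a₁, a₂)], (b₁, b₂) :: v, rfl, rfl, IsReduced.reduce_eq ?_⟩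
          refine isReduced_cons_cons.2 ⟨fun h => ?_, hred⟩
          cases a₂ <;> cases b₂ <;> simp_all
    · refine ⟨c, a :: a' :: u, v, rfl, rfl, IsReduced.reduce_eq ?_⟩
      exact isReduced_cons_cons.2 ⟨(isReduced_cons_cons.1 h₁).1, hred⟩

/-- Since `x` does not start with `p⁻¹`, less than one copy of `p` cancels in `p ^ k * x`. -/
theorem isPrefix_toWord_mk_pow_mul {p : List (α × Bool)} {k : ℕ} (hk : 2 ≤ k)
    (hp : IsReduced (replicate k p).flatten) {x : FreeGroup α} (hx : ¬ invRev p <+: x.toWord) :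
    p <+: (mk p ^ k * x).toWord := by
  rw [pow_mk, toWord_mul, toWord_mk, hp.reduce_eq]
  obtain ⟨c, u, v, hq, hxcv, huv⟩ := exists_reduce_append hp isReduced_toWord
  rw [huv]
  obtain ⟨k, rfl⟩ : ∃ k', k = k' + 1 := ⟨k - 1, by omega⟩
  have hpq : p <+: (replicate (k + 1) p).flatten := ⟨_, by rw [replicate_succ, flatten_cons]⟩
  have hpq' : p <:+ (replicate (k + 1) p).flatten :=
    ⟨(replicate k p).flatten, by rw [replicate_succ', flatten_append]; simp⟩
  have hlen : (replicate (k + 1) p).flatten.length = (k + 1) * p.length := by simp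
  have hc : c.length < p.length := by
    by_contra! hle
    refine hx (invRev_isPrefix_of_isSuffix_invRev ?_ |>.trans ⟨v, hxcv.symm⟩)
    exact suffix_of_suffix_length_le hpq' (hq ▸ suffix_append u _) (by simpa using hle)
  have hu : p.length ≤ u.length := by
    have := congrArg length hq
    simp only [hlen, length_append, invRev_length] at this
    nlinarith
  exact (prefix_of_prefix_length_le hpq (hq ▸ prefix_append u _) hu).trans (prefix_append u v)

theorem toWord_mul_takeWhile_dropWhile {p : α → Bool} {u : FreeGroup α}
    (hu : ∀ a ∈ u.toWord, p a.1) (v : FreeGroup α) :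
    (u * v).toWord.takeWhile (p ·.1) = (u * mk (v.toWord.takeWhile (p ·.1))).toWord ∧
      (u * v).toWord.dropWhile (p ·.1) = v.toWord.dropWhile (p ·.1) := by
  set T := v.toWord.takeWhile (p ·.1)
  set D := v.toWord.dropWhile (p ·.1)
  have hT : (mk T).toWord = T :=
    toWord_mk.trans (isReduced_toWord.infix (takeWhile_prefix _).isInfix).reduce_eq
  have hD : IsReduced D := isReduced_toWord.infix (dropWhile_suffix _).isInfix
  have hE : ∀ a ∈ (u * mk T).toWord, p a.1 := by
    intro a ha
    rcases mem_append.1 ((toWord_mul_sublist u (mk T)).subset ha) with ha | ha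
    · exact hu a ha
    · exact mem_takeWhile_imp (p := fun a : α × Bool => p a.1) (hT ▸ ha)
  have hD₁ := head?_dropWhile_eq_false (p := (p ·.1)) v.toWord
  have huv : (u * v).toWord = (u * mk T).toWord ++ D := by
    have hv : v = mk T * mk D := by rw [mul_mk, takeWhile_append_dropWhile, mk_toWord]
    rw [hv, ← mul_assoc, toWord_mul (u * mk T), toWord_mk, hD.reduce_eq]
    refine (isReduced_toWord.append_of_fst_ne hD fun a ha b hb hab => ?_).reduce_eq
    have := hD₁ b hb
    rw [← hab, hE a (mem_of_getLast? ha)] at this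
    exact Bool.true_eq_false_eq_False this
  rw [huv]
  exact takeWhile_dropWhile_append_of_forall hE hD₁

end DecidableEq

end FreeGroup

namespace Monoid.Coprod

open FreeGroup Function Pointwise

variable {ι K : Type} [Group K]

/-- `FreeGroup ι ∗ K` is the free product of these factors, `some i` standing for the cyclic group
generated by `of i`. -/
abbrev PingPongFactor (ι K : Type) : Option ι → Type
  | none => K
  | some _ => Multiplicative ℤ

instance : ∀ o, Group (PingPongFactor ι K o)
  | none => ‹Group K›
  | some _ => inferInstanceAs (Group (Multiplicative ℤ))

def ofCoprodIPingPong : CoprodI (PingPongFactor ι K) →* Coprod (FreeGroup ι) K :=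
  CoprodI.lift fun
    | none => inr
    | some i => zpowersHom _ (inl (of i))

def toCoprodIPingPong : Coprod (FreeGroup ι) K →* CoprodI (PingPongFactor ι K) :=
  lift (FreeGroup.lift fun i =>
      CoprodI.of (M := PingPongFactor ι K) (i := some i) (Multiplicative.ofAdd (1 : ℤ)))
    (CoprodI.of (M := PingPongFactor ι K) (i := none))

theorem ofCoprodIPingPong_comp_toCoprodIPingPong :
    (ofCoprodIPingPong (ι := ι) (K := K)).comp toCoprodIPingPong = MonoidHom.id _ := by
  refine hom_ext (FreeGroup.ext_hom _ _ fun i => ?_) (MonoidHom.ext fun k => ?_)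
  · change ofCoprodIPingPong (toCoprodIPingPong (inl (of i))) = inl (of i)
    rw [toCoprodIPingPong, lift_apply_inl, FreeGroup.lift_apply_of, ofCoprodIPingPong,
      CoprodI.lift_of]
    exact zpow_one (inl (of i) : Coprod (FreeGroup ι) K)
  · change ofCoprodIPingPong (toCoprodIPingPong (inr k)) = inr k
    rw [toCoprodIPingPong, lift_apply_inr, ofCoprodIPingPong, CoprodI.lift_of]

theorem injective_of_ping_pong [Nonempty ι] {G α : Type*} [Group G] [MulAction G α]
    (ψ : Coprod (FreeGroup ι) K →* G) (X : Option ι → Set α) (hX : ∀ o, (X o).Nonempty)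
    (hXdisj : Pairwise (Disjoint on X))
    (hfree : ∀ i (z : ℤ), z ≠ 0 → ∀ o, o ≠ some i → ψ (inl (of i)) ^ z • X o ⊆ X (some i))
    (hK : ∀ k : K, k ≠ 1 → ∀ i, ψ (inr k) • X (some i) ⊆ X none) :
    Injective ψ := by
  have hcard : ∃ o, 3 ≤ Cardinal.mk (PingPongFactor ι K o) :=
    ⟨some (Classical.arbitrary ι), (Cardinal.natCast_lt_aleph0 (n := 3)).le.trans
      (Cardinal.aleph0_le_mk (Multiplicative ℤ))⟩
  have hinj := CoprodI.lift_injective_of_ping_pong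
    (fun o => (ψ.comp ofCoprodIPingPong).comp CoprodI.of) (Or.inr hcard) X hX hXdisj ?_
  · have hlift : CoprodI.lift (fun o => (ψ.comp ofCoprodIPingPong).comp CoprodI.of) =
        ψ.comp ofCoprodIPingPong :=
      CoprodI.ext_hom _ _ fun o => MonoidHom.ext fun h => CoprodI.lift_of _ _
    rw [hlift, MonoidHom.coe_comp] at hinj
    exact hinj.of_comp_right (LeftInverse.surjective fun x =>
      DFunLike.congr_fun ofCoprodIPingPong_comp_toCoprodIPingPong x)
  · rintro (_ | i) o hne h h1
    · obtain _ | j := o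
      · exact absurd rfl hne
      · exact hK h h1 j
    · change ψ (ofCoprodIPingPong (CoprodI.of h)) • X o ⊆ X (some i)
      rw [ofCoprodIPingPong, CoprodI.lift_of]
      change ψ (inl (of i) ^ h.toAdd) • X o ⊆ X (some i)
      rw [map_zpow]
      exact hfree i _ (toAdd_eq_zero.not.2 h1) o hne.symm

end Monoid.Coprod

namespace SemidirectProduct

variable {N G : Type*} [Group N] [Group G] (φ : G →* MulAut N)

@[reducible]
def mulActionLeft : MulAction (N ⋊[φ] G) N where
  smul g x := g.left * φ g.right x
  one_smul x := by
    change (1 : N ⋊[φ] G).left * φ (1 : N ⋊[φ] G).right x = x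
    rw [one_left, one_right, map_one, MulAut.one_apply, one_mul]
  mul_smul g h x := by
    change (g * h).left * φ (g * h).right x = g.left * φ g.right (h.left * φ h.right x)
    rw [mul_left, mul_right, map_mul, MulAut.mul_apply, map_mul, mul_assoc]

end SemidirectProduct

namespace FreeProdEmbedding

open FreeGroup Function
open List hiding Disjoint

variable (n m : ℕ)

def gens : List (Fin n ⊕ Fin m) := (finRange n).map Sum.inl ++ (finRange m).map Sum.inr

def gensIn (b : Bool) : List (Fin n ⊕ Fin m) := if b then gens n m else (gens n m).reverse

/-- `pingWord n m i true` is the reduced word of `g₁^(i+1) ⋯ g_r^(i+1)`, whose cube is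
`hWord n m i`, and `pingWord n m i false` is the reduced word of its inverse. -/
def pingWord (i : Fin n) (b : Bool) : List ((Fin n ⊕ Fin m) × Bool) :=
  blockWord (i + 1) b (gensIn n m b)

variable {n m}

theorem gensIn_nodup (b : Bool) : (gensIn n m b).Nodup := by
  have : (gens n m).Nodup :=
    ((nodup_finRange n).map Sum.inl_injective).append
      ((nodup_finRange m).map Sum.inr_injective) (by simp [List.Disjoint])
  cases b
  · exact nodup_reverse.2 this
  · exact this

theorem inl_mem_gensIn (b : Bool) (a : Fin n) : Sum.inl a ∈ gensIn n m b := by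
  cases b <;> simp [gensIn, gens]

theorem invRev_pingWord (i : Fin n) (b : Bool) :
    invRev (pingWord n m i b) = pingWord n m i (!b) := by
  cases b <;> simp [pingWord, gensIn, invRev_blockWord]

theorem isReduced_flatten_replicate_pingWord (k : ℕ) (i : Fin n) (b : Bool) :
    IsReduced (replicate k (pingWord n m i b)).flatten :=
  isReduced_of_forall_snd_eq (b := b) fun x hx => by
    obtain ⟨L, hL, hx⟩ := mem_flatten.1 hx
    rw [eq_of_mem_replicate hL] at hx
    exact snd_eq_of_mem_blockWord hx

theorem hWord_eq_mk_pow (i : Fin n) : hWord n m i = mk (pingWord n m i true) ^ 3 := by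
  simp only [hWord, ofFn_eq_map, pingWord, gensIn, gens, if_true, blockWord_append,
    ← mul_mk, prod_append, ← prod_map_of_pow, map_map]
  rfl

theorem hWord_zpow (i : Fin n) {z : ℤ} (hz : z ≠ 0) :
    hWord n m i ^ z = mk (pingWord n m i (decide (0 < z))) ^ (3 * z.natAbs) := by
  have hinv : mk (pingWord n m i false) = (mk (pingWord n m i true))⁻¹ := by
    rw [inv_mk, invRev_pingWord, Bool.not_true]
  rw [hWord_eq_mk_pow, pow_mul]
  obtain ⟨k, rfl | rfl⟩ := Int.eq_nat_or_neg z
  · rw [zpow_natCast, Int.natAbs_natCast, decide_eq_true (by omega)]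
  · rw [zpow_neg, zpow_natCast, Int.natAbs_neg, Int.natAbs_natCast, decide_eq_false (by omega),
      hinv, inv_pow, inv_pow]

theorem dropWhile_pingWord (i : Fin n) (b : Bool) :
    (pingWord n m i b).dropWhile (·.1.isRight) =
      blockWord (i + 1) b ((gensIn n m b).dropWhile Sum.isRight) :=
  dropWhile_blockWord i.succ_pos _ _ _

theorem inl_mem_dropWhile_gensIn (b : Bool) (a : Fin n) :
    Sum.inl a ∈ (gensIn n m b).dropWhile Sum.isRight := by
  have h := inl_mem_gensIn (m := m) b a
  rw [← takeWhile_append_dropWhile (p := Sum.isRight) (l := gensIn n m b), mem_append] at h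
  exact h.resolve_left fun h' => by simpa using mem_takeWhile_imp h'

theorem dropWhile_pingWord_ne_nil (i : Fin n) (b : Bool) :
    (pingWord n m i b).dropWhile (·.1.isRight) ≠ [] := by
  obtain ⟨x, L, hL⟩ :=
    exists_cons_of_ne_nil (ne_nil_of_mem (inl_mem_dropWhile_gensIn (m := m) b i))
  rw [dropWhile_pingWord, hL, blockWord_cons, replicate_succ]
  exact cons_ne_nil _ _

theorem eq_of_isPrefix_dropWhile_pingWord {f : Fin n ⊕ Fin m → Fin n ⊕ Fin m}
    (hf : Injective f) {i j : Fin n} {b b' : Bool} {W : List ((Fin n ⊕ Fin m) × Bool)}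
    (hi : ((pingWord n m i b).dropWhile (·.1.isRight)).map (fun a => (f a.1, a.2)) <+: W)
    (hj : (pingWord n m j b').dropWhile (·.1.isRight) <+: W) :
    i = j ∧ b = b' ∧ ∀ a, f (Sum.inl a) = Sum.inl a := by
  rw [dropWhile_pingWord, ← blockWord_map] at hi
  rw [dropWhile_pingWord] at hj
  obtain ⟨x, L, hL⟩ :=
    exists_cons_of_ne_nil (ne_nil_of_mem (inl_mem_dropWhile_gensIn (m := m) b i))
  obtain ⟨x', L', hL'⟩ :=
    exists_cons_of_ne_nil (ne_nil_of_mem (inl_mem_dropWhile_gensIn (m := m) b' j))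
  obtain rfl : b = b' := by
    rw [hL, map_cons] at hi
    rw [hL'] at hj
    have h₀ := hi.getElem?_eq_some (getElem?_blockWord_cons_of_lt b _ _ (Nat.succ_pos i))
    have h₀' := hj.getElem?_eq_some (getElem?_blockWord_cons_of_lt b' _ _ (Nat.succ_pos j))
    simp_all
  have hnodup :=
    (gensIn_nodup (n := n) (m := m) b).sublist (dropWhile_suffix Sum.isRight).sublist
  have hij : i = j := by
    rcases L with _ | ⟨d, L⟩
    · have hi' := inl_mem_dropWhile_gensIn (m := m) b i
      have hj' := inl_mem_dropWhile_gensIn (m := m) b j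
      simp only [hL, mem_singleton] at hi' hj'
      exact Sum.inl_injective (hi'.trans hj'.symm)
    · rw [hL] at hnodup hj
      rw [hL, map_cons, map_cons] at hi
      have hxd : x ≠ d := (nodup_cons.1 hnodup).1 ∘ (· ▸ mem_cons_self)
      have h₁ := le_of_blockWord_isPrefix (Nat.succ_pos j) hxd hi hj
      have h₂ := le_of_blockWord_isPrefix (Nat.succ_pos i) (hf.ne hxd) hj hi
      exact Fin.ext (by omega)
  subst hij
  refine ⟨rfl, rfl, fun a => ?_⟩
  have heq := (prefix_of_prefix_length_le hi hj (by rw [blockWord_map, length_map])).eq_of_length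
    (by rw [blockWord_map, length_map])
  have hfix :=
    map_inj_left.1 ((blockWord_injective (Nat.succ_pos i) b heq).trans (map_id _).symm)
  exact hfix _ (inl_mem_dropWhile_gensIn b a)

variable (n m) in
def pingSet : Option (Fin n) → Set (FreeGroup (Fin n ⊕ Fin m))
  | none => {x | ∀ i b, ¬ pingWord n m i b <+: x.toWord}
  | some i => {x | ∃ b, pingWord n m i b <+: x.toWord}

theorem pingSet_nonempty : ∀ o, (pingSet n m o).Nonempty
  | none => ⟨1, fun i b h => dropWhile_pingWord_ne_nil i b <| by
      rw [toWord_one, prefix_nil] at h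
      rw [h, dropWhile_nil]⟩
  | some i => ⟨mk (pingWord n m i true), true, by
      rw [toWord_mk, (isReduced_of_forall_snd_eq (L := pingWord n m i true)
        fun _ => snd_eq_of_mem_blockWord).reduce_eq]⟩

theorem pingSet_pairwise_disjoint : Pairwise (Disjoint on pingSet n m) := by
  rintro (_ | i) (_ | j) hne <;> rw [onFun, Set.disjoint_left]
  · exact absurd rfl hne
  · exact fun x hx ⟨b, hb⟩ => hx j b hb
  · exact fun x ⟨b, hb⟩ hx => hx i b hb
  · rintro x ⟨b, hi⟩ ⟨b', hj⟩
    have hi' := (hi.takeWhile_dropWhile (dropWhile_pingWord_ne_nil i b)).2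
    have hj' := (hj.takeWhile_dropWhile (dropWhile_pingWord_ne_nil j b')).2
    exact hne <| congrArg some
      (eq_of_isPrefix_dropWhile_pingWord injective_id (by simpa using hi') hj').1

theorem hWord_zpow_mul_mem {i : Fin n} {z : ℤ} (hz : z ≠ 0) {x : FreeGroup (Fin n ⊕ Fin m)}
    (hx : ∀ b, ¬ pingWord n m i b <+: x.toWord) :
    hWord n m i ^ z * x ∈ pingSet n m (some i) := by
  rw [hWord_zpow i hz]
  refine ⟨_, isPrefix_toWord_mk_pow_mul (by omega)
    (isReduced_flatten_replicate_pingWord _ _ _) ?_⟩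
  rw [invRev_pingWord]
  exact hx _

theorem permAutS_apply (σ : Equiv.Perm (Fin n)) (x : FreeGroup (Fin n ⊕ Fin m)) :
    permAutS n m σ x = map (Sum.map σ id) x :=
  rfl

theorem permAutS_map_inr (σ : Equiv.Perm (Fin n)) (w : FreeGroup (Fin m)) :
    permAutS n m σ (map Sum.inr w) = map Sum.inr w := by
  rw [permAutS_apply, map.comp]
  rfl

theorem takeWhile_dropWhile_toWord_permAutS (σ : Equiv.Perm (Fin n))
    (x : FreeGroup (Fin n ⊕ Fin m)) :
    (permAutS n m σ x).toWord.takeWhile (·.1.isRight) = x.toWord.takeWhile (·.1.isRight) ∧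
      (permAutS n m σ x).toWord.dropWhile (·.1.isRight) =
        (x.toWord.dropWhile (·.1.isRight)).map fun a => (Sum.map σ id a.1, a.2) := by
  rw [permAutS_apply, toWord_map (Sum.map_injective.2 ⟨σ.injective, injective_id⟩),
    takeWhile_map, dropWhile_map]
  have hright : ((·.1.isRight) ∘ fun a : (Fin n ⊕ Fin m) × Bool => (Sum.map σ id a.1, a.2)) =
      (·.1.isRight) := by
    ext ⟨a | a, _⟩ <;> rfl
  rw [hright]
  refine ⟨(map_congr_left fun a ha => ?_).trans (map_id _), rfl⟩
  obtain ⟨a | a, b⟩ := a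
  · simpa using mem_takeWhile_imp ha
  · rfl

theorem map_inr_mul_permAutS_mem {σ : Equiv.Perm (Fin n)} {w : FreeGroup (Fin m)}
    (hσw : (σ, w) ≠ 1) {i : Fin n} {x : FreeGroup (Fin n ⊕ Fin m)}
    (hx : x ∈ pingSet n m (some i)) : map Sum.inr w * permAutS n m σ x ∈ pingSet n m none := by
  intro j b' hj
  obtain ⟨b, hi⟩ := hx
  have hu : ∀ a ∈ (map (Sum.inr (α := Fin n)) w).toWord, a.1.isRight := by
    rw [toWord_map Sum.inr_injective]
    simp
  obtain ⟨hT, hD⟩ := toWord_mul_takeWhile_dropWhile hu (permAutS n m σ x)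
  obtain ⟨hTσ, hDσ⟩ := takeWhile_dropWhile_toWord_permAutS σ x
  obtain ⟨hTx, hDx⟩ := hi.takeWhile_dropWhile (dropWhile_pingWord_ne_nil i b)
  obtain ⟨hTy, hDy⟩ := hj.takeWhile_dropWhile (dropWhile_pingWord_ne_nil j b')
  rw [hD, hDσ] at hDy
  obtain ⟨rfl, rfl, hσ⟩ := eq_of_isPrefix_dropWhile_pingWord
    (Sum.map_injective.2 ⟨σ.injective, injective_id⟩) (hDx.map _) hDy
  have hσ1 : σ = 1 := Equiv.ext fun a => Sum.inl_injective (hσ a)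
  set T := x.toWord.takeWhile (·.1.isRight)
  have hmkT : (mk T).toWord = T :=
    toWord_mk.trans (isReduced_toWord.infix (takeWhile_prefix _).isInfix).reduce_eq
  have hu1 : map Sum.inr w * mk T = mk T :=
    toWord_injective (by rw [hmkT, ← hTσ, ← hT, hTy, ← hTx, hTσ])
  have hw1 : w = 1 :=
    map_injective Sum.inr_injective (by rw [_root_.map_one, ← mul_eq_right.1 hu1])
  exact hσw (Prod.ext hσ1 hw1)

theorem commute_inr_inl_map_inr (σ : Equiv.Perm (Fin n)) (w : FreeGroup (Fin m)) :
    Commute (SemidirectProduct.inr (φ := permAutS n m) σ)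
      (SemidirectProduct.inl (map Sum.inr w)) := by
  ext
  · simp [permAutS_map_inr]
  · simp

end FreeProdEmbedding

open Monoid FreeGroup FreeProdEmbedding in
/-- (a) In `F_r ⋊[α] Sₙ` the elements `(1, σ)` and `(g_j, 1)` commute for `n + 1 ≤ j ≤ r`;
(b) the homomorphism from the free product `Fₙ ∗ (Sₙ × Fₘ)` to `F_r ⋊[α] Sₙ` determined by
sending the `i`-th free generator to `(h_i, 1)`, each `(σ, 1)` to `(1, σ)`, and the `j`-th
generator of `Fₘ` to `(g_{n+j}, 1)`, is injective. -/
theorem free_prod_embeds_semidirect (n m : ℕ) (hn : 1 ≤ n) :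
    (∀ (σ : Equiv.Perm (Fin n)) (j : Fin m),
      Commute (SemidirectProduct.inr (φ := permAutS n m) σ)
        (SemidirectProduct.inl (FreeGroup.of (Sum.inr j : Fin n ⊕ Fin m)))) ∧
    (∀ ψ : Monoid.Coprod (FreeGroup (Fin n)) (Equiv.Perm (Fin n) × FreeGroup (Fin m)) →*
        FreeGroup (Fin n ⊕ Fin m) ⋊[permAutS n m] Equiv.Perm (Fin n),
      (∀ i : Fin n, ψ (Coprod.inl (FreeGroup.of i)) = SemidirectProduct.inl (hWord n m i)) →
      (∀ σ : Equiv.Perm (Fin n), ψ (Coprod.inr (σ, 1)) = SemidirectProduct.inr σ) →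
      (∀ j : Fin m, ψ (Coprod.inr (1, FreeGroup.of j))
          = SemidirectProduct.inl (FreeGroup.of (Sum.inr j : Fin n ⊕ Fin m))) →
      Function.Injective ψ) := by
  refine ⟨fun σ j => map.of (f := Sum.inr) ▸ commute_inr_inl_map_inr σ (of j),
    fun ψ hψF hψS hψW => ?_⟩
  have hψFm : ∀ w, ψ (Coprod.inr (1, w)) = SemidirectProduct.inl (map Sum.inr w) := fun w =>
    DFunLike.congr_fun (FreeGroup.ext_hom ((ψ.comp Coprod.inr).comp (MonoidHom.inr _ _))
      (SemidirectProduct.inl.comp (map Sum.inr)) fun j => by simp [hψW]) w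
  have hψK : ∀ σ w, ψ (Coprod.inr (σ, w)) = ⟨map Sum.inr w, σ⟩ := fun σ w => by
    rw [SemidirectProduct.mk_eq_inl_mul_inr, ← hψFm, ← hψS, ← _root_.map_mul, ← _root_.map_mul,
      Prod.mk_mul_mk, one_mul, mul_one]
  have : Nonempty (Fin n) := ⟨⟨0, hn⟩⟩
  let _ := SemidirectProduct.mulActionLeft (permAutS n m)
  refine Coprod.injective_of_ping_pong ψ (pingSet n m) pingSet_nonempty pingSet_pairwise_disjoint
    ?_ ?_
  · rintro i z hz o ho _ ⟨x, hx, rfl⟩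
    rw [hψF, ← map_zpow]
    change hWord n m i ^ z * permAutS n m 1 x ∈ _
    rw [_root_.map_one, MulAut.one_apply]
    exact hWord_zpow_mul_mem hz fun b hb =>
      Set.disjoint_left.1 (pingSet_pairwise_disjoint ho) hx ⟨b, hb⟩
  · rintro ⟨σ, w⟩ hσw i _ ⟨x, hx, rfl⟩
    rw [hψK]
    exact map_inr_mul_permAutS_mem hσw hx
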